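/- arXiv:1705.02437 — 3 statements merged into one kernel-verified Lean document; each statement's English description precedes it below -/
import Mathlib

section
/- Fix n ∈ ℕ and k ≤ n. Let a : ℝ → Matrix (Fin n) (Fin n) ℝ be such that for every t the matrix a(t) is symmetric and a(t) i j equals -1 if i = j and 0 if i ≠ j, whenever i < k or j < k. Let f : ℝ → (Fin n → ℝ) have twice differentiable components satisfying the linear system f_j''(t) + Σ_i a(t) i j · f_i(t) = 0 for all j and all t. If f_i(t) → 0 as t → -∞ for every i, and f_i(0) = 0 for every i < k, then f_i(t) = 0 for all t ∈ ℝ and all i < k. -/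
/-!
Along each of the first `k` coordinates the curvature matrix acts as `-1` and does not couple
to the other coordinates, so `f_i'' = f_i` is a scalar equation whose solutions are
`A eᵗ + B e⁻ᵗ`. Decay at `-∞` kills `B`, and `f_i(0) = 0` then kills `A`.
-/

open Filter Real

theorem eq_mul_exp_of_hasDerivAt_const_mul {g : ℝ → ℝ} {c : ℝ}
    (hg : ∀ t, HasDerivAt g (c * g t) t) (t : ℝ) : g t = g 0 * exp (c * t) := by
  set h : ℝ → ℝ := fun s => exp (-(c * s)) * g s
  have hh : ∀ s, HasDerivAt h 0 s := fun s => by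
    have := ((hasDerivAt_id s).const_mul c).neg.exp.mul (hg s)
    exact this.congr_deriv (by simp only [id]; ring)
  have hconst : h t = h 0 :=
    is_const_of_deriv_eq_zero (fun s => (hh s).differentiableAt) (fun s => (hh s).deriv) t 0
  simp only [h, mul_zero, neg_zero, exp_zero, one_mul] at hconst
  rw [← hconst, mul_right_comm, ← exp_add, neg_add_cancel, exp_zero, one_mul]

theorem two_mul_eq_of_hasDerivAt_of_hasDerivAt_eq_self {F F' : ℝ → ℝ}
    (hF : ∀ t, HasDerivAt F (F' t) t) (hF' : ∀ t, HasDerivAt F' (F t) t) (t : ℝ) :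
    2 * F t = (F 0 + F' 0) * exp t - (F' 0 - F 0) * exp (-t) := by
  have hsum : F t + F' t = (F 0 + F' 0) * exp (1 * t) :=
    eq_mul_exp_of_hasDerivAt_const_mul (g := fun s => F s + F' s)
      (fun s => ((hF s).add (hF' s)).congr_deriv (by ring)) t
  have hdiff : F' t - F t = (F' 0 - F 0) * exp (-1 * t) :=
    eq_mul_exp_of_hasDerivAt_const_mul (g := fun s => F' s - F s)
      (fun s => ((hF' s).sub (hF s)).congr_deriv (by ring)) t
  rw [one_mul] at hsum
  rw [neg_one_mul] at hdiff
  linarith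

theorem eq_zero_of_hasDerivAt_of_hasDerivAt_eq_self {F F' : ℝ → ℝ}
    (hF : ∀ t, HasDerivAt F (F' t) t) (hF' : ∀ t, HasDerivAt F' (F t) t)
    (hdecay : Tendsto F atBot (nhds 0)) (h0 : F 0 = 0) (t : ℝ) : F t = 0 := by
  have hF_eq := two_mul_eq_of_hasDerivAt_of_hasDerivAt_eq_self hF hF'
  set A := F 0 + F' 0
  set B := F' 0 - F 0
  -- `B = (A eˢ - 2 F s) eˢ` and the right-hand side tends to `0` as `s → -∞`.
  have hB : B = 0 := by
    have hlim : Tendsto (fun s => (A * exp s - 2 * F s) * exp s) atBot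
        (nhds ((A * 0 - 2 * 0) * 0)) :=
      ((tendsto_exp_atBot.const_mul A).sub (hdecay.const_mul 2)).mul tendsto_exp_atBot
    have hB_eq : (fun s => (A * exp s - 2 * F s) * exp s) = fun _ => B := by
      funext s
      rw [hF_eq s, sub_sub_cancel, mul_assoc, ← exp_add, neg_add_cancel, exp_zero, mul_one]
    rw [hB_eq, mul_zero] at hlim
    exact tendsto_nhds_unique tendsto_const_nhds hlim
  have hA : A = 0 := by linarith [hF_eq 0]
  simpa [hA, hB] using hF_eq t

theorem Matrix.sum_mul_eq_neg_of_col_eq_neg_single {ι R : Type*} [Fintype ι]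
    [DecidableEq ι] [Ring R] {M : Matrix ι ι R} {i : ι}
    (hM : ∀ j, M j i = if j = i then -1 else 0) (v : ι → R) :
    ∑ j, M j i * v j = -v i := by
  rw [Finset.sum_eq_single i (fun j _ hj => by rw [hM, if_neg hj, zero_mul])
    (fun hi => absurd (Finset.mem_univ i) hi), hM, if_pos rfl, neg_one_mul]

theorem stmt_1_general (n k : ℕ)
    (a : ℝ → Matrix (Fin n) (Fin n) ℝ)
    (hentries : ∀ t : ℝ, ∀ i j : Fin n, ((i : ℕ) < k ∨ (j : ℕ) < k) →
      a t i j = if i = j then -1 else 0)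
    (f : ℝ → Fin n → ℝ)
    (hdiff : ∀ i : Fin n, Differentiable ℝ (fun t => f t i))
    (hdiff' : ∀ i : Fin n, Differentiable ℝ (deriv (fun t => f t i)))
    (hode : ∀ j : Fin n, ∀ t : ℝ,
      deriv (deriv (fun s => f s j)) t + ∑ i : Fin n, a t i j * f t i = 0)
    (hdecay : ∀ i : Fin n, Tendsto (fun t => f t i) atBot (nhds 0))
    (hinit : ∀ i : Fin n, (i : ℕ) < k → f 0 i = 0) :
    ∀ t : ℝ, ∀ i : Fin n, (i : ℕ) < k → f t i = 0 := by
  intro t i hi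
  have hsecond : ∀ s, deriv (deriv fun r => f r i) s = f s i := fun s => by
    have := hode i s
    rw [Matrix.sum_mul_eq_neg_of_col_eq_neg_single (fun j => hentries s j i (Or.inr hi))] at this
    linarith
  refine eq_zero_of_hasDerivAt_of_hasDerivAt_eq_self (fun s => (hdiff i s).hasDerivAt)
    (fun s => ?_) (hdecay i) (hinit i hi) t
  exact hsecond s ▸ (hdiff' i s).hasDerivAt

theorem stmt_1 (n k : ℕ) (hk : k ≤ n)
    (a : ℝ → Matrix (Fin n) (Fin n) ℝ)
    (hsym : ∀ t : ℝ, (a t).IsSymm)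
    (hentries : ∀ t : ℝ, ∀ i j : Fin n, ((i : ℕ) < k ∨ (j : ℕ) < k) →
      a t i j = if i = j then -1 else 0)
    (f : ℝ → Fin n → ℝ)
    (hdiff : ∀ i : Fin n, Differentiable ℝ (fun t => f t i))
    (hdiff' : ∀ i : Fin n, Differentiable ℝ (deriv (fun t => f t i)))
    (hode : ∀ j : Fin n, ∀ t : ℝ,
      deriv (deriv (fun s => f s j)) t + ∑ i : Fin n, a t i j * f t i = 0)
    (hdecay : ∀ i : Fin n, Tendsto (fun t => f t i) atBot (nhds 0))
    (hinit : ∀ i : Fin n, (i : ℕ) < k → f 0 i = 0) :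
    ∀ t : ℝ, ∀ i : Fin n, (i : ℕ) < k → f t i = 0 :=
  stmt_1_general n k a hentries f hdiff hdiff' hode hdecay hinit
end

section
/- Let g : ℝ → ℝ satisfy g(t) > 0 for all t ≥ 0, let T > 0, ε ∈ (0,1), δ > 0, and let A ⊆ [0, ∞) be Lebesgue-measurable with liminf_{S→∞} volume(A ∩ [0,S])/S ≥ δ. Assume: (i) g(t) ≤ exp(t - s)·g(s) for all 0 ≤ s ≤ t; and (ii) g(t + T) ≤ (1 - ε)·exp(T)·g(t) for all t ∈ A. Then limsup_{t→∞} (log g(t))/t < 1. -/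
/-!
Normalise by `h t = exp (-t) * g t`: hypothesis (i) says that `h` is antitone on `[0, ∞)`, and (ii)
that `h` drops by the factor `1 - ε` across `[t, t + T]` whenever `t ∈ A`. If the time spent in `A`
before `S` exceeds `k T`, the continuity of that occupation time lets one chain `k` such drops
inside `[0, S]`, so `h S ≤ (1 - ε) ^ k * h 0`. Since `A` has lower density at least `δ`, one may
take `k ≈ δ S / (2 T)`, whence `log g S ≤ (1 + δ log (1 - ε) / (2 T)) S + O(1)`.
-/

open MeasureTheory Filter Real

open Set

noncomputable def occupationTime (A : Set ℝ) (t : ℝ) : ℝ :=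
  (volume (A ∩ Icc 0 t)).toReal

namespace occupationTime

variable {A : Set ℝ}

lemma volume_ne_top (A : Set ℝ) (t : ℝ) : volume (A ∩ Icc 0 t) ≠ ⊤ :=
  ((measure_mono inter_subset_right).trans_lt measure_Icc_lt_top).ne

lemma monotone (A : Set ℝ) : Monotone (occupationTime A) := fun _ t hst =>
  ENNReal.toReal_mono (volume_ne_top A t)
    (measure_mono (inter_subset_inter_right _ (Icc_subset_Icc_right hst)))

@[simp]
lemma zero (A : Set ℝ) : occupationTime A 0 = 0 := by
  refine ENNReal.toReal_eq_zero_iff _ |>.2 (Or.inl (measure_mono_null inter_subset_right ?_))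
  simp

lemma nonneg_of_pos {t : ℝ} (ht : 0 < occupationTime A t) : 0 ≤ t := by
  by_contra! h
  simp [occupationTime, Icc_eq_empty_of_lt h] at ht

lemma le_add_sub {s t : ℝ} (hst : s ≤ t) :
    occupationTime A t ≤ occupationTime A s + (t - s) := by
  have hsub : A ∩ Icc 0 t ⊆ (A ∩ Icc 0 s) ∪ Ioc s t := by
    rintro x ⟨hxA, hx0, hxt⟩
    rcases le_or_gt x s with hxs | hxs
    · exact Or.inl ⟨hxA, hx0, hxs⟩
    · exact Or.inr ⟨hxs, hxt⟩
  have := ENNReal.toReal_le_add ((measure_mono hsub).trans (measure_union_le _ _))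
    (volume_ne_top A s) measure_Ioc_lt_top.ne
  rwa [Real.volume_Ioc, ENNReal.toReal_ofReal (sub_nonneg.2 hst)] at this

lemma lipschitzWith_one (A : Set ℝ) : LipschitzWith 1 (occupationTime A) := by
  refine LipschitzWith.of_le_add fun x y => ?_
  rcases le_total x y with hxy | hyx
  · linarith [monotone A hxy, dist_nonneg (x := x) (y := y)]
  · linarith [le_add_sub (A := A) hyx, le_abs_self (x - y), Real.dist_eq x y]

lemma exists_mem_lt {b c : ℝ} (hc : 0 ≤ c) (hcb : c < occupationTime A b) :
    ∃ t ∈ A ∩ Icc 0 b, c < occupationTime A t := by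
  obtain ⟨s, ⟨hs0, hsb⟩, hs⟩ :
      ∃ s ∈ Icc 0 b, occupationTime A s = (c + occupationTime A b) / 2 :=
    intermediate_value_Icc (nonneg_of_pos (hc.trans_lt hcb))
      (lipschitzWith_one A).continuous.continuousOn ⟨by simp; linarith, by linarith⟩
  obtain ⟨t, htA, hst, htb⟩ : (A ∩ Ioc s b).Nonempty := by
    by_contra! hempty
    have : A ∩ Icc 0 b ⊆ A ∩ Icc 0 s := fun x ⟨hxA, hx0, hxb⟩ =>
      ⟨hxA, hx0, not_lt.1 fun hsx => hempty.subset ⟨hxA, hsx, hxb⟩⟩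
    have : occupationTime A b ≤ occupationTime A s :=
      ENNReal.toReal_mono (volume_ne_top A s) (measure_mono this)
    linarith
  exact ⟨t, ⟨htA, hs0.trans hst.le, htb⟩, by linarith [monotone A hst.le]⟩

lemma eventually_mul_lt {a : ℝ}
    (ha : a < liminf (fun S => occupationTime A S / S) atTop) :
    ∀ᶠ S in atTop, a * S < occupationTime A S := by
  have hbdd : IsBoundedUnder (· ≥ ·) atTop fun S => occupationTime A S / S :=
    ⟨0, eventually_map.2 <| (eventually_ge_atTop 0).mono fun S hS =>
      div_nonneg ENNReal.toReal_nonneg hS⟩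
  filter_upwards [eventually_lt_of_lt_liminf ha hbdd, eventually_gt_atTop 0] with S hS hS0
  exact (lt_div_iff₀ hS0).1 hS

end occupationTime

namespace AntitoneOn

variable {h : ℝ → ℝ} {A : Set ℝ} {T r : ℝ}

lemma le_pow_mul_of_lt_occupationTime (hanti : AntitoneOn h (Ici 0)) (hT : 0 ≤ T) (hr : 0 ≤ r)
    (hcontract : ∀ t ∈ A, h (t + T) ≤ r * h t) :
    ∀ (k : ℕ) {S : ℝ}, k * T < occupationTime A S → h S ≤ r ^ k * h 0
  | 0, S, hS => by
    have hS0 := occupationTime.nonneg_of_pos (by simpa using hS)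
    simpa using hanti self_mem_Ici hS0 hS0
  | k + 1, S, hS => by
    have hST : k * T < occupationTime A (S - T) := by
      push_cast at hS
      linarith [occupationTime.le_add_sub (A := A) (sub_le_self S hT)]
    obtain ⟨t, ⟨htA, ht0, htS⟩, hkt⟩ :=
      occupationTime.exists_mem_lt (mul_nonneg k.cast_nonneg hT) hST
    calc h S ≤ h (t + T) := hanti (by simp; linarith) (by simp; linarith) (by linarith)
      _ ≤ r * h t := hcontract t htA
      _ ≤ r * (r ^ k * h 0) := by
        gcongr
        exact le_pow_mul_of_lt_occupationTime hanti hT hr hcontract k hkt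
      _ = r ^ (k + 1) * h 0 := by ring

lemma log_le_of_mul_lt_occupationTime (hanti : AntitoneOn h (Ici 0)) (hT : 0 < T) (hr0 : 0 < r)
    (hr1 : r ≤ 1) (hcontract : ∀ t ∈ A, h (t + T) ≤ r * h t) {a S : ℝ} (hpos : 0 < h S)
    (ha : 0 ≤ a * S) (hS : a * S < occupationTime A S) :
    log (h S) ≤ (a * S / T - 1) * log r + log (h 0) := by
  set k := ⌊a * S / T⌋₊
  have hkT : k * T < occupationTime A S :=
    lt_of_le_of_lt ((le_div_iff₀ hT).1 (Nat.floor_le (div_nonneg ha hT.le))) hS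
  have hbound := hanti.le_pow_mul_of_lt_occupationTime hT.le hr0.le hcontract k hkT
  have hS0 : S ∈ Ici 0 := occupationTime.nonneg_of_pos (ha.trans_lt hS)
  have hh0 : 0 < h 0 := hpos.trans_le (hanti self_mem_Ici hS0 hS0)
  calc log (h S) ≤ log (r ^ k * h 0) := log_le_log hpos hbound
    _ = k * log r + log (h 0) := by rw [log_mul (by positivity) hh0.ne', log_pow]
    _ ≤ (a * S / T - 1) * log r + log (h 0) := by
      gcongr ?_ + _
      exact mul_le_mul_of_nonpos_right (Nat.sub_one_lt_floor _).le (log_nonpos hr0.le hr1)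

end AntitoneOn

lemma Real.limsup_lt_of_eventually_le {ι : Type*} {l : Filter ι} {f : ι → ℝ} {c d : ℝ}
    (hf : ∀ᶠ x in l, f x ≤ c) (hcd : c < d) (hd : 0 < d) : limsup f l < d := by
  -- a real `limsup` that is not cobounded is the junk value `0`, whence `0 < d`
  by_cases hcob : l.IsCoboundedUnder (· ≤ ·) f
  · exact (limsup_le_of_le hcob hf).trans_lt hcd
  · rwa [Real.limsup_of_not_isCoboundedUnder hcob]

lemma limsup_lt_of_eventually_le_add_div {f : ℝ → ℝ} {b c d : ℝ}
    (hf : ∀ᶠ t in atTop, f t ≤ c + b / t) (hcd : c < d) (hd : 0 < d) : limsup f atTop < d := by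
  have hsmall : ∀ᶠ t in atTop, b / t < (d - c) / 2 :=
    (tendsto_const_nhds.div_atTop tendsto_id).eventually (gt_mem_nhds (by linarith))
  refine Real.limsup_lt_of_eventually_le (c := (c + d) / 2) ?_ (by linarith) hd
  filter_upwards [hf, hsmall] with t h1 h2
  linarith

lemma antitoneOn_exp_neg_mul {g : ℝ → ℝ}
    (hcocycle : ∀ s t : ℝ, 0 ≤ s → s ≤ t → g t ≤ exp (t - s) * g s) :
    AntitoneOn (fun t => exp (-t) * g t) (Ici 0) := fun s hs t _ hst =>
  calc exp (-t) * g t ≤ exp (-t) * (exp (t - s) * g s) := by gcongr; exact hcocycle s t hs hst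
    _ = exp (-s) * g s := by rw [← mul_assoc, ← exp_add]; ring_nf

lemma exp_neg_mul_add_le {g : ℝ → ℝ} {c t T : ℝ} (hg : g (t + T) ≤ c * exp T * g t) :
    exp (-(t + T)) * g (t + T) ≤ c * (exp (-t) * g t) :=
  calc exp (-(t + T)) * g (t + T) ≤ exp (-(t + T)) * (c * exp T * g t) := by gcongr
    _ = c * (exp (-t) * g t) := by rw [neg_add, exp_add, exp_neg T]; field_simp

theorem stmt_7_general (g : ℝ → ℝ) (hpos : ∀ t : ℝ, 0 ≤ t → 0 < g t)
    (T : ℝ) (hT : 0 < T) (ε : ℝ) (hε : ε ∈ Set.Ioo (0 : ℝ) 1) (δ : ℝ) (hδ : 0 < δ)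
    (A : Set ℝ)
    (hfreq : δ ≤ liminf (fun S : ℝ => (volume (A ∩ Set.Icc 0 S)).toReal / S) atTop)
    (hcocycle : ∀ s t : ℝ, 0 ≤ s → s ≤ t → g t ≤ Real.exp (t - s) * g s)
    (hcontract : ∀ t ∈ A, g (t + T) ≤ (1 - ε) * Real.exp T * g t) :
    limsup (fun t : ℝ => Real.log (g t) / t) atTop < 1 := by
  set h : ℝ → ℝ := fun t => exp (-t) * g t with hh
  have hε' : 0 < 1 - ε := sub_pos.2 hε.2
  have hL : δ / 2 / T * log (1 - ε) < 0 :=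
    mul_neg_of_pos_of_neg (by positivity) (log_neg hε' (by linarith [hε.1]))
  have hanti : AntitoneOn h (Ici 0) := antitoneOn_exp_neg_mul hcocycle
  have hcontract' : ∀ t ∈ A, h (t + T) ≤ (1 - ε) * h t := fun t ht =>
    exp_neg_mul_add_le (hcontract t ht)
  refine limsup_lt_of_eventually_le_add_div (c := 1 + δ / 2 / T * log (1 - ε))
    (b := log (h 0) - log (1 - ε)) ?_ (by linarith) one_pos
  filter_upwards [occupationTime.eventually_mul_lt ((half_lt_self hδ).trans_le hfreq),
    eventually_gt_atTop 0] with S hS hS0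
  have hlog := hanti.log_le_of_mul_lt_occupationTime hT hε' (by linarith [hε.1]) hcontract'
    (mul_pos (exp_pos _) (hpos S hS0.le)) (by positivity) hS
  have hlogg : log (g S) = S + log (h S) := by
    rw [hh, log_mul (exp_ne_zero _) (hpos S hS0.le).ne', log_exp]; ring
  have hrhs : (1 + δ / 2 / T * log (1 - ε) + (log (h 0) - log (1 - ε)) / S) * S
      = S + ((δ / 2 * S / T - 1) * log (1 - ε) + log (h 0)) := by
    field_simp
    ring
  rw [hlogg, div_le_iff₀ hS0, hrhs]
  linarith

theorem stmt_7 (g : ℝ → ℝ) (hpos : ∀ t : ℝ, 0 ≤ t → 0 < g t)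
    (T : ℝ) (hT : 0 < T) (ε : ℝ) (hε : ε ∈ Set.Ioo (0 : ℝ) 1) (δ : ℝ) (hδ : 0 < δ)
    (A : Set ℝ) (hA : A ⊆ Set.Ici (0 : ℝ)) (hmeas : MeasurableSet A)
    (hfreq : δ ≤ liminf (fun S : ℝ => (volume (A ∩ Set.Icc 0 S)).toReal / S) atTop)
    (hcocycle : ∀ s t : ℝ, 0 ≤ s → s ≤ t → g t ≤ Real.exp (t - s) * g s)
    (hcontract : ∀ t ∈ A, g (t + T) ≤ (1 - ε) * Real.exp T * g t) :
    limsup (fun t : ℝ => Real.log (g t) / t) atTop < 1 :=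
  stmt_7_general g hpos T hT ε hε δ hδ A hfreq hcocycle hcontract
end

section
/- Let X be a metric space and φ : ℝ × X → X a flow, i.e. φ(0, x) = x and φ(s + t, x) = φ(s, φ(t, x)) for all s, t ∈ ℝ and x ∈ X. Let R ⊆ X be an open set invariant under the flow, meaning φ(t, x) ∈ R for every x ∈ R and t ∈ ℝ. Let v ∈ R and suppose there is a sequence t_n → +∞ with φ(-t_n, v) → v. If w ∈ X satisfies dist(φ(-t, w), φ(-t, v)) → 0 as t → +∞, then w ∈ R. -/
open Filter

theorem stmt_10 {X : Type*} [MetricSpace X] (φ : ℝ × X → X)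
    (hflow0 : ∀ x : X, φ (0, x) = x)
    (hflowadd : ∀ s t : ℝ, ∀ x : X, φ (s + t, x) = φ (s, φ (t, x)))
    (R : Set X) (hopen : IsOpen R)
    (hinv : ∀ x ∈ R, ∀ t : ℝ, φ (t, x) ∈ R)
    (v : X) (hv : v ∈ R)
    (t_seq : ℕ → ℝ) (ht : Tendsto t_seq atTop atTop)
    (hrec : Tendsto (fun n => φ (-(t_seq n), v)) atTop (nhds v))
    (w : X)
    (hw : Tendsto (fun t : ℝ => dist (φ (-t, w)) (φ (-t, v))) atTop (nhds 0)) :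
    w ∈ R := by
  have h1 : Tendsto (fun n => dist (φ (-(t_seq n), w)) (φ (-(t_seq n), v))) atTop (nhds 0) :=
    hw.comp ht
  have h2 : Tendsto (fun n => dist (φ (-(t_seq n), v)) v) atTop (nhds 0) :=
    tendsto_iff_dist_tendsto_zero.mp hrec
  have h3 : Tendsto (fun n => φ (-(t_seq n), w)) atTop (nhds v) := by
    rw [tendsto_iff_dist_tendsto_zero]
    refine squeeze_zero (fun n => dist_nonneg) (fun n => dist_triangle _ (φ (-(t_seq n), v)) _) ?_
    simpa using h1.add h2
  have hev : ∀ᶠ n in atTop, φ (-(t_seq n), w) ∈ R :=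
    h3.eventually (hopen.mem_nhds hv)
  obtain ⟨n, hn⟩ := hev.exists
  have := hinv _ hn (t_seq n)
  rwa [← hflowadd, add_neg_cancel, hflow0] at this
end
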